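/- arXiv:1805.09440 — 4 statements merged into one kernel-verified Lean document; each statement's English description precedes it below -/
import Mathlib

section
/- Let Ω : ℝ → ℝ be C² with Ω'(t) < 0 for all t, let μ ∈ ℂ with Im μ > 0, let m > 0, and let ψ be a complex solution of -ψ'' + m²ψ + (Ω''+2Ω')(Ω-μ)^{-1} ψ = 0 on ℝ that decays exponentially together with ψ' at ±∞. Then ∫_ℝ (Ω''(t)+2Ω'(t)) |ψ(t)|² / (|Ω(t)-Re μ|² + (Im μ)²) dt = 0. -/
open MeasureTheory Real Set Filter Topology

/-! Let `F = Im (ψ̄ ψ')`. Since `|ψ'|²` is real, `F' = Im (ψ̄ ψ'')`, and the equation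
`ψ'' = (m² + c/(Ω - μ)) ψ` with `c = Ω'' + 2Ω'` turns this into `F' = Im (c/(Ω - μ)) |ψ|²`,
which is `Im μ` times the integrand. The decay makes `F` vanish at `±∞`, so `∫ F' = 0`,
and `Im μ > 0` can be cancelled. -/

open ComplexConjugate

theorem tendsto_cocompact_zero_of_norm_le_mul_exp {E : Type*} [NormedAddCommGroup E]
    {f : ℝ → E} {C ε : ℝ} (hε : 0 < ε) (hf : ∀ t, ‖f t‖ ≤ C * exp (-ε * |t|)) :
    Tendsto f (cocompact ℝ) (𝓝 0) := by
  refine squeeze_zero_norm hf ?_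
  have hexp : Tendsto (fun s : ℝ => C * exp (-ε * s)) atTop (𝓝 (C * 0)) :=
    (tendsto_exp_atBot.comp (tendsto_id.const_mul_atTop_of_neg (neg_neg_of_pos hε))).const_mul C
  rw [mul_zero] at hexp
  exact hexp.comp tendsto_norm_cocompact_atTop

theorem hasDerivAt_im_conj_mul {ψ ψ' : ℝ → ℂ} {ψ'' : ℂ} {t : ℝ}
    (hψ : HasDerivAt ψ (ψ' t) t) (hψ' : HasDerivAt ψ' ψ'' t) :
    HasDerivAt (fun s => (conj (ψ s) * ψ' s).im) (conj (ψ t) * ψ'').im t := by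
  have hprod : HasDerivAt (fun s => conj (ψ s) * ψ' s)
      (conj (ψ' t) * ψ' t + conj (ψ t) * ψ'') t := hψ.star.mul hψ'
  refine (Complex.imCLM.hasFDerivAt.comp_hasDerivAt t hprod).congr_deriv ?_
  simp [Complex.conj_mul', ← Complex.ofReal_pow]

theorem im_conj_mul_mul_self (a z : ℂ) : (conj z * (a * z)).im = a.im * ‖z‖ ^ 2 := by
  rw [mul_left_comm, Complex.conj_mul', ← Complex.ofReal_pow, Complex.im_mul_ofReal]

theorem im_ofReal_div_ofReal_sub (c x : ℝ) (μ : ℂ) :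
    ((c : ℂ) / (x - μ)).im = c * μ.im / ((x - μ.re) ^ 2 + μ.im ^ 2) := by
  simp only [Complex.div_im, Complex.ofReal_im, Complex.sub_re, Complex.ofReal_re, zero_mul,
    Complex.normSq_apply, Complex.sub_im, zero_sub, mul_neg, neg_mul, neg_neg, zero_div]
  ring

theorem imaginary_part_identity_general (Ω : ℝ → ℝ) (μ : ℂ) (hμ : 0 < μ.im) (m : ℝ)
    (ψ : ℝ → ℂ) (hψ : ContDiff ℝ 2 ψ)
    (heq : ∀ t : ℝ, -(deriv (deriv ψ) t) + (m : ℂ) ^ 2 * ψ t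
        + (((deriv (deriv Ω) t + 2 * deriv Ω t : ℝ) : ℂ) / ((Ω t : ℂ) - μ)) * ψ t = 0)
    (hdecay : ∃ C ε : ℝ, 0 < C ∧ 0 < ε ∧ ∀ t : ℝ,
      ‖ψ t‖ ≤ C * Real.exp (-ε * |t|) ∧ ‖deriv ψ t‖ ≤ C * Real.exp (-ε * |t|)) :
    (∫ t : ℝ, (deriv (deriv Ω) t + 2 * deriv Ω t) * ‖ψ t‖ ^ 2 /
      ((Ω t - μ.re) ^ 2 + μ.im ^ 2)) = 0 := by
  set g : ℝ → ℝ := fun t => (deriv (deriv Ω) t + 2 * deriv Ω t) * ‖ψ t‖ ^ 2 /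
      ((Ω t - μ.re) ^ 2 + μ.im ^ 2)
  by_cases hg : Integrable g
  swap
  -- a non-integrable integrand has Bochner integral `0` by convention
  · exact integral_undef hg
  have hF' (t : ℝ) :
      HasDerivAt (fun s => (conj (ψ s) * deriv ψ s).im) (μ.im * g t) t := by
    convert hasDerivAt_im_conj_mul (hψ.differentiable two_ne_zero t).hasDerivAt
      ((contDiff_succ_iff_deriv.1 hψ).2.2.differentiable one_ne_zero t).hasDerivAt using 1
    have hψ'' : deriv (deriv ψ) t = ((m : ℂ) ^ 2
        + ((deriv (deriv Ω) t + 2 * deriv Ω t : ℝ) : ℂ) / ((Ω t : ℂ) - μ)) * ψ t := by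
      linear_combination -heq t
    have hden : (Ω t - μ.re) ^ 2 + μ.im ^ 2 ≠ 0 := by positivity
    rw [hψ'', im_conj_mul_mul_self, Complex.add_im, im_ofReal_div_ofReal_sub,
      ← Complex.ofReal_pow, Complex.ofReal_im, zero_add]
    simp only [g]
    field_simp
  obtain ⟨C, ε, -, hε, hCε⟩ := hdecay
  have hF_lim : Tendsto (fun s => (conj (ψ s) * deriv ψ s).im) (cocompact ℝ) (𝓝 0) := by
    have hψ_lim := tendsto_cocompact_zero_of_norm_le_mul_exp hε fun t => (hCε t).1
    have hψ'_lim := tendsto_cocompact_zero_of_norm_le_mul_exp hε fun t => (hCε t).2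
    have hprod := ((Complex.continuous_conj.tendsto 0).comp hψ_lim).mul hψ'_lim
    rw [map_zero, mul_zero] at hprod
    exact (Complex.continuous_im.tendsto 0).comp hprod
  have hzero := integral_of_hasDerivAt_of_tendsto hF' (hg.const_mul μ.im)
    (hF_lim.mono_left atBot_le_cocompact) (hF_lim.mono_left atTop_le_cocompact)
  rw [integral_const_mul, sub_zero] at hzero
  exact (mul_eq_zero.1 hzero).resolve_left hμ.ne'

/-- The imaginary-part identity obtained by multiplying the eigenvalue equation by ψ̄ and
integrating by parts. -/
theorem imaginary_part_identity (Ω : ℝ → ℝ) (hΩ : ContDiff ℝ 2 Ω)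
    (hΩ' : ∀ t, deriv Ω t < 0) (μ : ℂ) (hμ : 0 < μ.im) (m : ℝ) (hm : 0 < m)
    (ψ : ℝ → ℂ) (hψ : ContDiff ℝ 2 ψ)
    (heq : ∀ t : ℝ, -(deriv (deriv ψ) t) + (m : ℂ) ^ 2 * ψ t
        + (((deriv (deriv Ω) t + 2 * deriv Ω t : ℝ) : ℂ) / ((Ω t : ℂ) - μ)) * ψ t = 0)
    (hdecay : ∃ C ε : ℝ, 0 < C ∧ 0 < ε ∧ ∀ t : ℝ,
      ‖ψ t‖ ≤ C * Real.exp (-ε * |t|) ∧ ‖deriv ψ t‖ ≤ C * Real.exp (-ε * |t|)) :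
    (∫ t : ℝ, (deriv (deriv Ω) t + 2 * deriv Ω t) * ‖ψ t‖ ^ 2 /
      ((Ω t - μ.re) ^ 2 + μ.im ^ 2)) = 0 :=
  imaginary_part_identity_general Ω μ hμ m ψ hψ heq hdecay
end

section
/- Let Ω : ℝ → ℝ be smooth with Ω' < 0, A = Ω'' + 2Ω', and suppose b ∈ ℝ satisfies the structural condition that u(t) = (Ω(t)-Ω(b)) e^t for t ≤ b, u(t) = 0 for t > b, lies in W^{1,2}(ℝ) (which holds when Ω(t) - Ω(-∞) = O(e^{2t}) as t → -∞ and Ω(b) < Ω(t) for t < b with A(b)=0). Then ∫_ℝ |u'(t)|² + (Ω(t)-Ω(b))^{-1} A(t) |u(t)|² dt = -∫_ℝ |u(t)|² dt. Consequently the bottom of the spectrum of -d²/dt² + (Ω-Ω(b))^{-1}A on L²(ℝ) is strictly less than -1. -/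
open MeasureTheory Real Set Filter Topology
open scoped ENNReal

lemma integrable_mul_L2 {f g : ℝ → ℝ} (hf : MemLp f 2 volume) (hg : MemLp g 2 volume) :
    Integrable (fun t => f t * g t) volume := by
  have := hg.smul hf (p := 2) (q := 2) (r := 1)
  rw [memLp_one_iff_integrable] at this
  simpa [smul_eq_mul, Pi.mul_def] using this

lemma not_integrableOn_of_ge {F : ℝ → ℝ} {m ε : ℝ} (hε : 0 < ε)
    (hF : ∀ x < m, ε ≤ |F x|) : ¬ IntegrableOn F (Iio m) volume := by
  intro h
  have h2 : (volume.restrict (Iio m)) {x | ε ≤ ‖F x‖} < ⊤ :=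
    h.measure_norm_ge_lt_top hε
  have h3 : Iio m ⊆ {x | ε ≤ ‖F x‖} := fun x hx => by
    simpa [Real.norm_eq_abs] using hF x hx
  have h4 : (⊤ : ℝ≥0∞) ≤ (volume.restrict (Iio m)) {x | ε ≤ ‖F x‖} := by
    rw [Measure.restrict_apply₀' nullMeasurableSet_Iio, inter_eq_right.mpr h3]
    simp
  exact absurd (lt_of_le_of_lt h4 h2) (lt_irrefl _)

/-- FTC on `Iic b` with vanishing boundary term at `-∞` forced by integrability of `H`. -/
lemma integral_Iic_eq_of_hasDerivAt {b : ℝ} {H H' F : ℝ → ℝ}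
    (hH : ∀ t, HasDerivAt H (H' t) t) (hH'c : Continuous H')
    (hF : ∀ t < b, F t = H' t) (hFi : IntegrableOn F (Iic b) volume)
    (hHi : IntegrableOn H (Iio b) volume) :
    ∫ t in Iic b, F t = H b := by
  have hb : ∀ᵐ x : ℝ, x ≠ b := by
    rw [ae_iff]; simpa using measure_singleton b
  have hab : ∀ a ≤ b, ∫ t in a..b, F t = H b - H a := by
    intro a ha
    have h1 : ∫ t in a..b, H' t = H b - H a :=
      intervalIntegral.integral_eq_sub_of_hasDerivAt (fun x _ => hH x)
        (hH'c.intervalIntegrable a b)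
    rw [← h1]
    apply intervalIntegral.integral_congr_ae
    filter_upwards [hb] with x hx hmem
    apply hF
    rw [Set.uIoc_of_le ha] at hmem
    exact lt_of_le_of_ne hmem.2 hx
  have htend : Tendsto (fun a => ∫ t in a..b, F t) atBot (𝓝 (∫ t in Iic b, F t)) :=
    intervalIntegral_tendsto_integral_Iic b hFi tendsto_id
  have htendH : Tendsto H atBot (𝓝 (H b - ∫ t in Iic b, F t)) := by
    refine Tendsto.congr' ?_ (tendsto_const_nhds.sub htend)
    filter_upwards [eventually_le_atBot b] with a ha
    rw [hab a ha]; ring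
  set L := H b - ∫ t in Iic b, F t with hL
  have hL0 : L = 0 := by
    by_contra hne
    have hpos : 0 < |L| / 2 := by positivity
    have hev : ∀ᶠ a in atBot, |H a - L| < |L| / 2 :=
      (htendH.eventually (Metric.ball_mem_nhds L hpos)).mono (by
        intro a ha; simpa [Real.dist_eq] using ha)
    rw [eventually_atBot] at hev
    obtain ⟨m, hm⟩ := hev
    have hm' : ∀ x < min m b, |L| / 2 ≤ |H x| := by
      intro x hx
      have h1 := hm x (le_of_lt (lt_of_lt_of_le hx (min_le_left _ _)))
      have h2 : |L| - |H x| ≤ |L - H x| := abs_sub_abs_le_abs_sub L (H x)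
      rw [abs_sub_comm L (H x)] at h2
      linarith
    exact not_integrableOn_of_ge hpos hm'
      (hHi.mono_set (fun x hx =>
        mem_Iio.mpr (lt_of_lt_of_le (mem_Iio.mp hx) (min_le_right m b))))
  have h5 : H b - ∫ t in Iic b, F t = 0 := hL0
  linarith

section Main
variable {Ω : ℝ → ℝ} (hΩ : ContDiff ℝ (⊤ : ℕ∞) Ω) (b : ℝ)
include hΩ

lemma contDiff_deriv1 : ContDiff ℝ ((⊤:ℕ∞):WithTop ℕ∞) (deriv Ω) := by
  have h := hΩ.of_le (le_refl ((⊤:ℕ∞):WithTop ℕ∞))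
  exact (contDiff_infty_iff_deriv.mp h).2

lemma contDeriv2 : Continuous (deriv (deriv Ω)) :=
  (contDiff_infty_iff_deriv.mp (contDiff_deriv1 hΩ)).2.continuous

lemma hasDerivAt_U (t : ℝ) :
    HasDerivAt (fun s => (Ω s - Ω b) * Real.exp s)
      ((deriv Ω t + Ω t - Ω b) * Real.exp t) t := by
  have h1 : HasDerivAt Ω (deriv Ω t) t :=
    (hΩ.differentiable (by simp)).differentiableAt.hasDerivAt
  have h2 : HasDerivAt (fun s => Ω s - Ω b) (deriv Ω t) t := h1.sub_const _
  have : HasDerivAt (fun s => (Ω s - Ω b) * Real.exp s)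
      (deriv Ω t * Real.exp t + (Ω t - Ω b) * Real.exp t) t := h2.mul (Real.hasDerivAt_exp t)
  convert this using 1
  ring

lemma hasDerivAt_g (t : ℝ) :
    HasDerivAt (fun s => (deriv Ω s + Ω s - Ω b) * Real.exp s)
      ((deriv (deriv Ω) t + 2 * deriv Ω t + Ω t - Ω b) * Real.exp t) t := by
  have h1 : HasDerivAt (deriv Ω) (deriv (deriv Ω) t) t :=
    ((contDiff_deriv1 hΩ).differentiable (by simp)).differentiableAt.hasDerivAt
  have h0 : HasDerivAt Ω (deriv Ω t) t :=
    (hΩ.differentiable (by simp)).differentiableAt.hasDerivAt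
  have h2 : HasDerivAt (fun s => deriv Ω s + Ω s - Ω b)
      (deriv (deriv Ω) t + deriv Ω t) t := (h1.add h0).sub_const _
  have : HasDerivAt (fun s => (deriv Ω s + Ω s - Ω b) * Real.exp s)
      ((deriv (deriv Ω) t + deriv Ω t) * Real.exp t + (deriv Ω t + Ω t - Ω b) * Real.exp t) t :=
    h2.mul (Real.hasDerivAt_exp t)
  convert this using 1
  ring

end Main

/-- Proposition 4.2: the explicit test function makes the Rayleigh quotient equal to -1,
and the bottom of the spectrum is strictly below -1. -/
theorem bottom_of_spectrum_below (Ω : ℝ → ℝ) (hΩ : ContDiff ℝ (⊤ : ℕ∞) Ω) (hΩ' : ∀ t, deriv Ω t < 0)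
    (A : ℝ → ℝ) (hA : ∀ t, A t = deriv (deriv Ω) t + 2 * deriv Ω t)
    (b : ℝ) (hAb : A b = 0)
    (u : ℝ → ℝ) (hu : ∀ t, u t = if t ≤ b then (Ω t - Ω b) * Real.exp t else 0)
    (huL2 : MemLp u 2 volume) (hu'L2 : MemLp (deriv u) 2 volume)
    (hvbdd : ∃ C : ℝ, ∀ t, |A t| ≤ C * |Ω t - Ω b|) :
    (∫ t : ℝ, ((deriv u t) ^ 2 + (A t / (Ω t - Ω b)) * (u t) ^ 2)) = -∫ t : ℝ, (u t) ^ 2 ∧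
    sInf {r : ℝ | ∃ w : ℝ → ℝ, w ≠ 0 ∧ MemLp w 2 volume ∧ MemLp (deriv w) 2 volume ∧
        r = (∫ t : ℝ, ((deriv w t) ^ 2 + (A t / (Ω t - Ω b)) * (w t) ^ 2)) /
              ∫ t : ℝ, (w t) ^ 2} < -1 := by
  obtain ⟨C, hC⟩ := hvbdd
  have hbae : ∀ᵐ x : ℝ, x ≠ b := by
    rw [ae_iff]; simpa using measure_singleton b
  -- basic facts
  have hanti : StrictAnti Ω := strictAnti_of_deriv_neg hΩ'
  have hfpos : ∀ t < b, 0 < Ω t - Ω b := fun t ht => sub_pos.mpr (hanti ht)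
  have hfne : ∀ t, t ≠ b → Ω t - Ω b ≠ 0 := by
    intro t ht
    rcases lt_or_gt_of_ne ht with h | h
    · exact ne_of_gt (hfpos t h)
    · exact ne_of_lt (sub_neg.mpr (hanti h))
  have hC0 : 0 ≤ C := by
    have h1 := hC (b - 1)
    have h2 : 0 < |Ω (b-1) - Ω b| := abs_pos.mpr (hfne _ (by norm_num))
    nlinarith [abs_nonneg (A (b-1))]
  have hVbd : ∀ t, |A t / (Ω t - Ω b)| ≤ C := by
    intro t
    by_cases ht : t = b
    · subst ht; simp [hAb, hC0]
    · rw [abs_div, div_le_iff₀ (abs_pos.mpr (hfne t ht))]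
      exact hC t
  have hc0 : Continuous Ω := hΩ.continuous
  have hc1 : Continuous (deriv Ω) := (contDiff_deriv1 hΩ).continuous
  have hc2 : Continuous (deriv (deriv Ω)) := contDeriv2 hΩ
  have hAc : Continuous A := by
    have : A = fun t => deriv (deriv Ω) t + 2 * deriv Ω t := funext hA
    rw [this]
    exact hc2.add (continuous_const.mul hc1)
  have hVmeas : AEStronglyMeasurable (fun t => A t / (Ω t - Ω b)) volume :=
    (hAc.measurable.div ((hc0.sub continuous_const).measurable)).aestronglyMeasurable
  have hVnorm : ∀ t, ‖A t / (Ω t - Ω b)‖ ≤ C := fun t => by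
    rw [Real.norm_eq_abs]; exact hVbd t
  -- continuity of the auxiliary derivatives
  have hgc : Continuous (fun t => (deriv Ω t + Ω t - Ω b) * Real.exp t) :=
    ((hc1.add hc0).sub continuous_const).mul Real.continuous_exp
  have hg'c : Continuous (fun t => (deriv (deriv Ω) t + 2 * deriv Ω t + Ω t - Ω b) *
      Real.exp t) :=
    (((hc2.add (continuous_const.mul hc1)).add hc0).sub continuous_const).mul Real.continuous_exp
  have hUc : Continuous (fun t => (Ω t - Ω b) * Real.exp t) :=
    (hc0.sub continuous_const).mul Real.continuous_exp
  -- pointwise description of u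
  have hueq : ∀ t ≤ b, u t = (Ω t - Ω b) * Real.exp t := fun t ht => by
    rw [hu t, if_pos ht]
  have hu0 : ∀ t, b < t → u t = 0 := fun t ht => by
    rw [hu t, if_neg (not_le.mpr ht)]
  have hderivu_lt : ∀ t < b, HasDerivAt u ((deriv Ω t + Ω t - Ω b) * Real.exp t) t := by
    intro t ht
    refine (hasDerivAt_U hΩ b t).congr_of_eventuallyEq ?_
    filter_upwards [Iio_mem_nhds ht] with s hs
    exact hueq s (le_of_lt hs)
  have hderivu_eq : ∀ t < b, deriv u t = (deriv Ω t + Ω t - Ω b) * Real.exp t :=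
    fun t ht => (hderivu_lt t ht).deriv
  have hderivu_gt0 : ∀ t, b < t → HasDerivAt u 0 t := by
    intro t ht
    refine (hasDerivAt_const t (0:ℝ)).congr_of_eventuallyEq ?_
    filter_upwards [Ioi_mem_nhds ht] with s hs
    exact hu0 s hs
  have hderivu_gt : ∀ t, b < t → deriv u t = 0 := fun t ht => (hderivu_gt0 t ht).deriv
  -- integrability blocks
  have hI1 : Integrable (fun t => (deriv u t)^2) volume := hu'L2.integrable_sq
  have hI2 : Integrable (fun t => (u t)^2) volume := huL2.integrable_sq
  have hI3 : Integrable (fun t => (A t / (Ω t - Ω b)) * (u t)^2) volume :=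
    hI2.bdd_mul hVmeas (ae_of_all _ hVnorm)
  have hIF : Integrable (fun t => (deriv u t)^2 + (A t / (Ω t - Ω b) + 1) * (u t)^2) volume := by
    have h := (hI1.add hI3).add hI2
    exact h.congr (ae_of_all _ fun t => by simp only [Pi.add_apply]; ring)
  -- key identity
  have hkey : ∫ t in Iic b, ((deriv u t)^2 + (A t / (Ω t - Ω b) + 1) * (u t)^2) =
      (fun t => ((deriv Ω t + Ω t - Ω b) * Real.exp t) * ((Ω t - Ω b) * Real.exp t)) b := by
    apply integral_Iic_eq_of_hasDerivAt
      (H := fun t => ((deriv Ω t + Ω t - Ω b) * Real.exp t) * ((Ω t - Ω b) * Real.exp t))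
      (H' := fun t => ((deriv (deriv Ω) t + 2 * deriv Ω t + Ω t - Ω b) * Real.exp t) *
        ((Ω t - Ω b) * Real.exp t) +
        ((deriv Ω t + Ω t - Ω b) * Real.exp t) * ((deriv Ω t + Ω t - Ω b) * Real.exp t))
    · exact fun t => (hasDerivAt_g hΩ b t).mul (hasDerivAt_U hΩ b t)
    · exact (hg'c.mul hUc).add (hgc.mul hgc)
    · intro t ht
      rw [hderivu_eq t ht, hueq t ht.le, hA t]
      have hf := hfne t (ne_of_lt ht)
      field_simp
      ring
    · exact hIF.integrableOn
    · refine ((integrable_mul_L2 hu'L2 huL2).integrableOn).congr_fun ?_ measurableSet_Iio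
      intro t ht
      rw [mem_Iio] at ht
      show deriv u t * u t = _
      rw [hderivu_eq t ht, hueq t (le_of_lt ht)]
  have hkey0 : ∫ t in Iic b, ((deriv u t)^2 + (A t / (Ω t - Ω b) + 1) * (u t)^2) = 0 := by
    rw [hkey]; simp
  -- restriction to Iic b
  have hres1 : ∫ t : ℝ, ((deriv u t)^2 + (A t / (Ω t - Ω b)) * (u t)^2) =
      ∫ t in Iic b, ((deriv u t)^2 + (A t / (Ω t - Ω b)) * (u t)^2) := by
    symm
    apply setIntegral_eq_integral_of_forall_compl_eq_zero
    intro x hx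
    rw [mem_Iic, not_le] at hx
    rw [hderivu_gt x hx, hu0 x hx]
    ring
  have hres2 : ∫ t : ℝ, (u t)^2 = ∫ t in Iic b, (u t)^2 := by
    symm
    apply setIntegral_eq_integral_of_forall_compl_eq_zero
    intro x hx
    rw [mem_Iic, not_le] at hx
    rw [hu0 x hx]
    ring
  have part1 : ∫ t : ℝ, ((deriv u t)^2 + (A t / (Ω t - Ω b)) * (u t)^2) =
      -∫ t : ℝ, (u t)^2 := by
    rw [hres1, hres2]
    have hsub : ∀ t : ℝ, (deriv u t)^2 + (A t / (Ω t - Ω b)) * (u t)^2 =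
        ((deriv u t)^2 + (A t / (Ω t - Ω b) + 1) * (u t)^2) - (u t)^2 := fun t => by ring
    calc ∫ t in Iic b, ((deriv u t)^2 + (A t / (Ω t - Ω b)) * (u t)^2)
        = ∫ t in Iic b, (((deriv u t)^2 + (A t / (Ω t - Ω b) + 1) * (u t)^2) - (u t)^2) := by
          exact setIntegral_congr_fun measurableSet_Iic (fun t _ => hsub t)
      _ = (∫ t in Iic b, ((deriv u t)^2 + (A t / (Ω t - Ω b) + 1) * (u t)^2)) -
            ∫ t in Iic b, (u t)^2 := integral_sub hIF.integrableOn hI2.integrableOn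
      _ = -∫ t in Iic b, (u t)^2 := by rw [hkey0]; ring
  refine ⟨part1, ?_⟩
  -- ================= PART 2 =================
  -- bump function
  set B : ContDiffBump b := ⟨1, 2, one_pos, one_lt_two⟩ with hB
  set φ : ℝ → ℝ := fun t => B t with hφ
  have hφtop : ContDiff ℝ ((⊤:ℕ∞):WithTop ℕ∞) φ := B.contDiff
  have hφc : Continuous φ := hφtop.continuous
  have hφd : Differentiable ℝ φ := hφtop.differentiable (by simp)
  have hφ'c : Continuous (deriv φ) := (contDiff_infty_iff_deriv.mp hφtop).2.continuous
  have hφcs : HasCompactSupport φ := B.hasCompactSupport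
  have hφ'cs : HasCompactSupport (deriv φ) := hφcs.deriv
  have hφ2 : MemLp φ 2 volume := hφc.memLp_of_hasCompactSupport hφcs
  have hφ'2 : MemLp (deriv φ) 2 volume := hφ'c.memLp_of_hasCompactSupport hφ'cs
  have hφb : φ b = 1 := B.one_of_mem_closedBall (Metric.mem_closedBall_self (by norm_num))
  -- cross-term identity
  have hkey2 : ∫ t in Iic b, (deriv u t * deriv φ t +
      (A t / (Ω t - Ω b) + 1) * (u t * φ t)) =
      (fun t => ((deriv Ω t + Ω t - Ω b) * Real.exp t) * φ t) b := by
    apply integral_Iic_eq_of_hasDerivAt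
      (H := fun t => ((deriv Ω t + Ω t - Ω b) * Real.exp t) * φ t)
      (H' := fun t => ((deriv (deriv Ω) t + 2 * deriv Ω t + Ω t - Ω b) * Real.exp t) * φ t +
        ((deriv Ω t + Ω t - Ω b) * Real.exp t) * deriv φ t)
    · exact fun t => (hasDerivAt_g hΩ b t).mul ((hφd t).hasDerivAt)
    · exact (hg'c.mul hφc).add (hgc.mul hφ'c)
    · intro t ht
      rw [hderivu_eq t ht, hueq t ht.le, hA t]
      have hf := hfne t (ne_of_lt ht)
      field_simp
      ring
    · have h1 : Integrable (fun t => deriv u t * deriv φ t) volume :=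
        integrable_mul_L2 hu'L2 hφ'2
      have h2 : Integrable (fun t => u t * φ t) volume := integrable_mul_L2 huL2 hφ2
      have h3 : Integrable (fun t => (A t / (Ω t - Ω b) + 1) * (u t * φ t)) volume := by
        refine h2.bdd_mul (hVmeas.add aestronglyMeasurable_const) (c := C + 1) (ae_of_all _ fun t => ?_)
        rw [Real.norm_eq_abs]
        calc |A t / (Ω t - Ω b) + 1| ≤ |A t / (Ω t - Ω b)| + |1| := abs_add_le _ _
        _ ≤ C + 1 := by rw [abs_one]; linarith [hVbd t]
      exact (h1.add h3).integrableOn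
    · refine ((integrable_mul_L2 hu'L2 hφ2).integrableOn).congr_fun ?_ measurableSet_Iio
      intro t ht
      rw [mem_Iio] at ht
      show deriv u t * φ t = _
      rw [hderivu_eq t ht]
  have hX : ∫ t in Iic b, (deriv u t * deriv φ t + (A t / (Ω t - Ω b) + 1) * (u t * φ t)) =
      deriv Ω b * Real.exp b := by
    rw [hkey2]
    show ((deriv Ω b + Ω b - Ω b) * Real.exp b) * φ b = _
    rw [hφb]; ring
  have hXfull : ∫ t : ℝ, (deriv u t * deriv φ t + (A t / (Ω t - Ω b) + 1) * (u t * φ t)) =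
      deriv Ω b * Real.exp b := by
    rw [← hX]
    symm
    apply setIntegral_eq_integral_of_forall_compl_eq_zero
    intro x hx
    rw [mem_Iic, not_le] at hx
    rw [hderivu_gt x hx, hu0 x hx]
    ring
  set X : ℝ := deriv Ω b * Real.exp b with hXdef
  have hXneg : X < 0 := mul_neg_of_neg_of_pos (hΩ' b) (Real.exp_pos b)
  -- φ integrals
  have hIφ1 : Integrable (fun t => (deriv φ t)^2) volume := hφ'2.integrable_sq
  have hIφ2 : Integrable (fun t => (φ t)^2) volume := hφ2.integrable_sq
  have hIφ3 : Integrable (fun t => (A t / (Ω t - Ω b)) * (φ t)^2) volume :=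
    hIφ2.bdd_mul hVmeas (ae_of_all _ hVnorm)
  set Nφ := ∫ t : ℝ, ((deriv φ t)^2 + (A t / (Ω t - Ω b)) * (φ t)^2) with hNφ
  set Dφ := ∫ t : ℝ, (φ t)^2 with hDφ
  set Qφ := Nφ + Dφ with hQφ
  set ε := min 1 ((-X) / (|Qφ| + 1)) with hε
  have hεpos : 0 < ε := lt_min one_pos (div_pos (neg_pos.mpr hXneg) (by positivity))
  have hεQ : ε * Qφ < -2 * X := by
    have h1 : ε ≤ (-X)/(|Qφ|+1) := min_le_right _ _
    have h2 : ((-X)/(|Qφ|+1)) * (|Qφ|+1) = -X := div_mul_cancel₀ _ (by positivity)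
    nlinarith [mul_le_mul_of_nonneg_left (le_abs_self Qφ) hεpos.le,
      mul_le_mul_of_nonneg_right h1 (by positivity : (0:ℝ) ≤ |Qφ|+1), hεpos, hXneg,
      abs_nonneg Qφ]
  -- the test function w
  set w : ℝ → ℝ := fun t => u t + ε * φ t with hwdef
  have hwd : ∀ t, t ≠ b → HasDerivAt w (deriv u t + ε * deriv φ t) t := by
    intro t ht
    have h2 : HasDerivAt (fun s => ε * φ s) (ε * deriv φ t) t :=
      ((hφd t).hasDerivAt).const_mul ε
    rcases lt_or_gt_of_ne ht with h | h
    · have h1 : HasDerivAt u (deriv u t) t := by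
        rw [hderivu_eq t h]; exact hderivu_lt t h
      exact h1.add h2
    · have h1 : HasDerivAt u (deriv u t) t := by
        rw [hderivu_gt t h]; exact hderivu_gt0 t h
      exact h1.add h2
  have hwderiv : ∀ᵐ t : ℝ, deriv w t = deriv u t + ε * deriv φ t := by
    filter_upwards [hbae] with t ht
    exact (hwd t ht).deriv
  have hw2 : MemLp w 2 volume := huL2.add (hφ2.const_mul ε)
  have hw'2 : MemLp (deriv w) 2 volume := by
    refine MemLp.ae_eq ?_ (hu'L2.add (hφ'2.const_mul ε))
    filter_upwards [hwderiv] with t ht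
    exact ht.symm
  -- cross integrals
  have hG2int : Integrable (fun t => deriv u t * deriv φ t +
      (A t / (Ω t - Ω b)) * (u t * φ t)) volume :=
    (integrable_mul_L2 hu'L2 hφ'2).add ((integrable_mul_L2 huL2 hφ2).bdd_mul hVmeas (ae_of_all _ hVnorm))
  have huφ : Integrable (fun t => u t * φ t) volume := integrable_mul_L2 huL2 hφ2
  set Xv := ∫ t : ℝ, (deriv u t * deriv φ t + (A t / (Ω t - Ω b)) * (u t * φ t)) with hXv
  set a3 := ∫ t : ℝ, u t * φ t with ha3
  have hXvX : Xv + a3 = X := by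
    rw [hXv, ha3, ← integral_add hG2int huφ, ← hXfull]
    apply integral_congr_ae
    exact ae_of_all _ fun t => by ring
  -- main integrals for w and u
  set Nw := ∫ t : ℝ, ((deriv w t)^2 + (A t / (Ω t - Ω b)) * (w t)^2) with hNw
  set Dw := ∫ t : ℝ, (w t)^2 with hDw
  have hG1int : Integrable (fun t => (deriv u t)^2 + (A t / (Ω t - Ω b)) * (u t)^2) volume :=
    hI1.add hI3
  have hG3int : Integrable (fun t => (deriv φ t)^2 + (A t / (Ω t - Ω b)) * (φ t)^2) volume :=
    hIφ1.add hIφ3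
  have hNwexp : Nw = (∫ t : ℝ, ((deriv u t)^2 + (A t / (Ω t - Ω b)) * (u t)^2))
      + 2 * ε * Xv + ε^2 * Nφ := by
    rw [hNw]
    have hcongr : (fun t => (deriv w t)^2 + (A t / (Ω t - Ω b)) * (w t)^2) =ᵐ[volume]
        (fun t => ((deriv u t)^2 + (A t / (Ω t - Ω b)) * (u t)^2) +
          (2 * ε) * (deriv u t * deriv φ t + (A t / (Ω t - Ω b)) * (u t * φ t)) +
          ε^2 * ((deriv φ t)^2 + (A t / (Ω t - Ω b)) * (φ t)^2)) := by
      filter_upwards [hwderiv] with t ht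
      show (deriv w t)^2 + (A t / (Ω t - Ω b)) * (w t)^2 = _
      rw [ht]
      have hwt : w t = u t + ε * φ t := rfl
      rw [hwt]
      ring
    have hA1 : Integrable (fun t => ((deriv u t)^2 + (A t / (Ω t - Ω b)) * (u t)^2) +
        (2 * ε) * (deriv u t * deriv φ t + (A t / (Ω t - Ω b)) * (u t * φ t))) volume :=
      hG1int.add (hG2int.const_mul _)
    have hA2 : Integrable (fun t => ε^2 * ((deriv φ t)^2 + (A t / (Ω t - Ω b)) * (φ t)^2))
        volume := hG3int.const_mul _
    have hA3 : Integrable (fun t => (2 * ε) * (deriv u t * deriv φ t +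
        (A t / (Ω t - Ω b)) * (u t * φ t))) volume := hG2int.const_mul _
    rw [integral_congr_ae hcongr, integral_add hA1 hA2, integral_add hG1int hA3,
      integral_const_mul, integral_const_mul, ← hXv, ← hNφ]
  have hDwexp : Dw = (∫ t : ℝ, (u t)^2) + 2 * ε * a3 + ε^2 * Dφ := by
    rw [hDw]
    have hcongr2 : (fun t => (w t)^2) =
        (fun t => (u t)^2 + (2*ε) * (u t * φ t) + ε^2 * (φ t)^2) := by
      funext t
      have hwt : w t = u t + ε * φ t := rfl
      rw [hwt]; ring
    have hB1 : Integrable (fun t => (u t)^2 + (2*ε) * (u t * φ t)) volume :=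
      hI2.add (huφ.const_mul _)
    have hB2 : Integrable (fun t => ε^2 * (φ t)^2) volume := hIφ2.const_mul _
    have hB3 : Integrable (fun t => (2*ε) * (u t * φ t)) volume := huφ.const_mul _
    rw [hcongr2, integral_add hB1 hB2, integral_add hI2 hB3,
      integral_const_mul, integral_const_mul, ← ha3, ← hDφ]
  clear_value X Nφ Dφ Qφ ε Xv a3 Nw Dw
  have hQw : Nw + Dw < 0 := by
    have hkeyq : Nw + Dw = 2*ε*X + ε^2*Qφ := by
      rw [hNwexp, hDwexp, hQφ]
      linear_combination part1 + (2*ε) * hXvX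
    rw [hkeyq]
    have hint : ε * (ε * Qφ) < ε * (-2 * X) := mul_lt_mul_of_pos_left hεQ hεpos
    calc 2*ε*X + ε^2*Qφ = ε*(ε*Qφ) + 2*ε*X := by ring
      _ < ε*(-2*X) + 2*ε*X := by linarith only [hint]
      _ = 0 := by ring
  -- positivity of Dw
  have hDwnn : 0 ≤ Dw := by rw [hDw]; exact integral_nonneg fun t => sq_nonneg _
  have hIw1 : Integrable (fun t => (deriv w t)^2) volume := hw'2.integrable_sq
  have hIw2 : Integrable (fun t => (w t)^2) volume := hw2.integrable_sq
  have hIw3 : Integrable (fun t => (A t / (Ω t - Ω b)) * (w t)^2) volume :=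
    hIw2.bdd_mul hVmeas (ae_of_all _ hVnorm)
  have hNwsplit : Nw = (∫ t : ℝ, (deriv w t)^2) + ∫ t : ℝ, (A t / (Ω t - Ω b)) * (w t)^2 := by
    rw [hNw, integral_add hIw1 hIw3]
  have hDwpos : 0 < Dw := by
    rcases lt_or_eq_of_le hDwnn with h | h
    · exact h
    · exfalso
      have hw0 : ∀ᵐ t : ℝ, (w t)^2 = 0 := by
        have h0 := (integral_eq_zero_iff_of_nonneg_ae
          (ae_of_all _ fun t => sq_nonneg (w t)) hIw2).mp (by rw [← hDw]; exact h.symm)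
        filter_upwards [h0] with t ht
        exact ht
      have hV0 : ∫ t : ℝ, (A t / (Ω t - Ω b)) * (w t)^2 = 0 := by
        have heq : (fun t => (A t / (Ω t - Ω b)) * (w t)^2) =ᵐ[volume]
            (fun _ => (0:ℝ)) := by
          filter_upwards [hw0] with t ht
          rw [ht]; ring
        rw [integral_congr_ae heq, integral_zero]
      have hge : 0 ≤ Nw := by
        rw [hNwsplit, hV0, add_zero]
        exact integral_nonneg fun t => sq_nonneg _
      linarith only [hge, hQw, h]
  have hrlt : Nw / Dw < -1 := by
    rw [div_lt_iff₀ hDwpos]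
    linarith only [hQw]
  have hmem : Nw / Dw ∈ {r : ℝ | ∃ v : ℝ → ℝ, v ≠ 0 ∧ MemLp v 2 volume ∧
      MemLp (deriv v) 2 volume ∧
      r = (∫ t : ℝ, ((deriv v t) ^ 2 + (A t / (Ω t - Ω b)) * (v t) ^ 2)) /
            ∫ t : ℝ, (v t) ^ 2} := by
    refine ⟨w, ?_, hw2, hw'2, by rw [hNw, hDw]⟩
    intro h0
    have hz : Dw = 0 := by
      rw [hDw]
      have hzz : (fun t => (w t)^2) = fun _ => (0:ℝ) := by
        funext t
        rw [congrFun h0 t]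
        simp
      rw [hzz, integral_zero]
    linarith only [hz, hDwpos]
  have hBdd : BddBelow {r : ℝ | ∃ v : ℝ → ℝ, v ≠ 0 ∧ MemLp v 2 volume ∧
      MemLp (deriv v) 2 volume ∧
      r = (∫ t : ℝ, ((deriv v t) ^ 2 + (A t / (Ω t - Ω b)) * (v t) ^ 2)) /
            ∫ t : ℝ, (v t) ^ 2} := by
    refine ⟨-(C+1), ?_⟩
    rintro r ⟨v, hv0, hv2, hv'2, rfl⟩
    have hIv1 : Integrable (fun t => (deriv v t)^2) volume := hv'2.integrable_sq
    have hIv2 : Integrable (fun t => (v t)^2) volume := hv2.integrable_sq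
    have hIv3 : Integrable (fun t => (A t / (Ω t - Ω b)) * (v t)^2) volume :=
      hIv2.bdd_mul hVmeas (ae_of_all _ hVnorm)
    have hDnn : 0 ≤ ∫ t : ℝ, (v t)^2 := integral_nonneg fun t => sq_nonneg _
    rcases eq_or_lt_of_le hDnn with h | h
    · rw [← h, div_zero]; linarith only [hC0]
    · have hsplit : ∫ t : ℝ, ((deriv v t)^2 + (A t / (Ω t - Ω b)) * (v t)^2) =
          (∫ t : ℝ, (deriv v t)^2) + ∫ t : ℝ, (A t / (Ω t - Ω b)) * (v t)^2 :=
        integral_add hIv1 hIv3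
      have h1 : 0 ≤ ∫ t : ℝ, (deriv v t)^2 := integral_nonneg fun t => sq_nonneg _
      have h2 : -C * ∫ t : ℝ, (v t)^2 ≤ ∫ t : ℝ, (A t / (Ω t - Ω b)) * (v t)^2 := by
        rw [← integral_const_mul]
        apply integral_mono (hIv2.const_mul _) hIv3
        intro t
        exact mul_le_mul_of_nonneg_right (neg_le_of_abs_le (hVbd t)) (sq_nonneg _)
      rw [le_div_iff₀ h]
      linarith only [hsplit, h1, h2, hDnn]
  exact csInf_lt_of_lt hBdd hmem hrlt
end

section
/- Let Ω : ℝ → ℝ be smooth, strictly decreasing, with Ω' bounded away from 0 on compact sets, A smooth with A(d) = 0 where A/(Ω-Ω(d)) is bounded, and let μ₀ = Ω(d). For μ in the sector 𝔅 = {γ < arg(z-μ₀) < π-γ}, the multiplication operator M_μ : y ↦ ((Ω-μ)^{-1} - (Ω-μ₀)^{-1}) A y is uniformly bounded on L²(ℝ) for μ ∈ 𝔅, and ‖M_μ y‖_{L²} → 0 as μ → μ₀ within 𝔅, for each fixed y ∈ L²(ℝ). -/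
open MeasureTheory Real Set Filter Topology
open scoped ENNReal NNReal

private lemma sin_sector_aux {γ θ : ℝ} (hγ0 : 0 < γ) (hγ2 : γ < Real.pi / 2)
    (h1 : γ < θ) (h2 : θ < Real.pi - γ) : Real.sin γ ≤ Real.sin θ := by
  have hpi := Real.pi_pos
  rcases le_or_gt θ (Real.pi / 2) with h | h
  · exact Real.strictMonoOn_sin.monotoneOn ⟨by linarith, by linarith⟩ ⟨by linarith, h⟩ h1.le
  · rw [← Real.sin_pi_sub θ]
    exact Real.strictMonoOn_sin.monotoneOn ⟨by linarith, hγ2.le⟩ ⟨by linarith, by linarith⟩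
      (by linarith)

private lemma sector_aux {γ : ℝ} (hγ0 : 0 < γ) (hγ2 : γ < Real.pi / 2) {μ : ℂ} {r : ℝ}
    (h1 : γ < (μ - r).arg) (h2 : (μ - r).arg < Real.pi - γ) :
    0 < μ.im ∧ Real.sin γ * ‖μ - r‖ ≤ μ.im := by
  have hz : μ - (r : ℂ) ≠ 0 := by
    intro h
    rw [h, Complex.arg_zero] at h1
    linarith
  have habs : 0 < ‖μ - r‖ := by
    simpa [norm_pos_iff] using hz
  have him : (μ - (r : ℂ)).im = μ.im := by simp
  have hsin := Complex.sin_arg (μ - r)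
  have hs : 0 < Real.sin γ := Real.sin_pos_of_pos_of_lt_pi hγ0 (by linarith [Real.pi_pos])
  have hle : Real.sin γ ≤ Real.sin ((μ - r).arg) := sin_sector_aux hγ0 hγ2 h1 h2
  have key : Real.sin γ * ‖μ - r‖ ≤ μ.im := by
    have := mul_le_mul_of_nonneg_right hle habs.le
    rw [hsin, div_mul_cancel₀ _ habs.ne'] at this
    rwa [him] at this
  exact ⟨lt_of_lt_of_le (by positivity) key, key⟩

private lemma key_bound_aux {x r : ℝ} {μ : ℂ} {a C s : ℝ} (hC : 0 ≤ C) (hs : 0 < s)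
    (ha : |a| ≤ C * |x - r|) (him : 0 < μ.im)
    (habs : s * ‖μ - r‖ ≤ μ.im) :
    ‖(((x : ℂ) - μ)⁻¹ - ((x : ℂ) - r)⁻¹) * a‖ ≤ C / s := by
  by_cases hx : x = r
  · have ha0 : a = 0 := by
      have := ha
      rw [hx, sub_self, abs_zero, mul_zero] at this
      exact abs_eq_zero.mp (le_antisymm this (abs_nonneg a))
    simp [ha0]
    positivity
  · set u : ℂ := (x : ℂ) - μ with hu_def
    set v : ℂ := (x : ℂ) - r with hv_def
    have huim : u.im = -μ.im := by simp [hu_def]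
    have hu : u ≠ 0 := by
      intro h
      rw [h] at huim
      simp at huim
      linarith
    have hv : v ≠ 0 := by
      intro h
      apply hx
      have : ((x : ℂ) : ℂ) = (r : ℂ) := by
        rw [sub_eq_zero] at h; exact h
      exact_mod_cast this
    have hμr : μ - (r : ℂ) ≠ 0 := by
      intro h
      have : (μ - (r:ℂ)).im = 0 := by rw [h]; simp
      simp at this
      linarith
    have habsμr : 0 < ‖μ - r‖ := by simpa [norm_pos_iff] using hμr
    have habsu : s * ‖μ - r‖ ≤ ‖u‖ := by
      calc s * ‖μ - r‖ ≤ μ.im := habs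
        _ = |u.im| := by rw [huim, abs_neg, abs_of_pos him]
        _ ≤ ‖u‖ := Complex.abs_im_le_norm u
    have hdiff : u⁻¹ - v⁻¹ = (μ - r) * u⁻¹ * v⁻¹ := by
      field_simp
      ring
    have hvabs : ‖v‖ = |x - r| := by
      rw [hv_def]
      rw [← Complex.ofReal_sub, Complex.norm_real, Real.norm_eq_abs]
    have h1 : ‖(u⁻¹ - v⁻¹) * a‖ =
        ‖μ - r‖ * (‖u‖)⁻¹ * (‖v‖)⁻¹ * |a| := by
      rw [hdiff, norm_mul, norm_mul, norm_mul, norm_inv, norm_inv, Complex.norm_real, Real.norm_eq_abs]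
    rw [h1]
    have habsu' : 0 < ‖u‖ := by simpa [norm_pos_iff] using hu
    have habsv' : 0 < ‖v‖ := by simpa [norm_pos_iff] using hv
    calc ‖μ - r‖ * (‖u‖)⁻¹ * (‖v‖)⁻¹ * |a|
        ≤ ‖μ - r‖ * (‖u‖)⁻¹ * (‖v‖)⁻¹ * (C * ‖v‖) := by
          apply mul_le_mul_of_nonneg_left _ (by positivity)
          rw [hvabs]; exact ha
      _ = C * (‖μ - r‖ / ‖u‖) := by field_simp
      _ ≤ C * (1 / s) := by
          apply mul_le_mul_of_nonneg_left _ hC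
          rw [div_le_div_iff₀ habsu' hs]
          calc ‖μ - r‖ * s = s * ‖μ - r‖ := by ring
            _ ≤ ‖u‖ := habsu
            _ = 1 * ‖u‖ := (one_mul _).symm
      _ = C / s := by ring

/-- Lemma 5.1: the multiplication operator ((Ω-μ)⁻¹ - (Ω-μ₀)⁻¹)A is uniformly bounded on L²
for μ in the sector, and converges strongly to 0 as μ → μ₀ in the sector. -/
theorem multiplication_operator_estimate (Ω : ℝ → ℝ) (hΩ : ContDiff ℝ (⊤ : ℕ∞) Ω)
    (hanti : StrictAnti Ω) (A : ℝ → ℝ) (hAcont : Continuous A) (d : ℝ) (hAd : A d = 0)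
    (hAbdd : ∃ C : ℝ, ∀ t, |A t| ≤ C * |Ω t - Ω d|)
    (γ : ℝ) (hγ : γ ∈ Ioo 0 (Real.pi / 2)) (μ₀ : ℂ) (hμ₀ : μ₀ = (Ω d : ℂ)) :
    (∃ C : ℝ, 0 < C ∧ ∀ μ : ℂ, γ < (μ - μ₀).arg → (μ - μ₀).arg < Real.pi - γ →
      ∀ y : ℝ → ℂ, MemLp y 2 volume →
        eLpNorm (fun t => ((((Ω t : ℂ) - μ)⁻¹ - ((Ω t : ℂ) - μ₀)⁻¹) * (A t : ℂ)) * y t) 2 volume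
          ≤ ENNReal.ofReal C * eLpNorm y 2 volume) ∧
    (∀ y : ℝ → ℂ, MemLp y 2 volume →
      Tendsto (fun μ : ℂ =>
          eLpNorm (fun t => ((((Ω t : ℂ) - μ)⁻¹ - ((Ω t : ℂ) - μ₀)⁻¹) * (A t : ℂ)) * y t) 2 volume)
        (nhdsWithin μ₀ {z : ℂ | γ < (z - μ₀).arg ∧ (z - μ₀).arg < Real.pi - γ})
        (nhds 0)) := by
  obtain ⟨hγ0, hγ2⟩ := hγ
  obtain ⟨C₀, hC₀⟩ := hAbdd
  set s := Real.sin γ with hs_def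
  have hs : 0 < s := Real.sin_pos_of_pos_of_lt_pi hγ0 (by linarith [Real.pi_pos])
  have hC₁ : ∀ t, |A t| ≤ |C₀| * |Ω t - Ω d| := fun t =>
    (hC₀ t).trans (mul_le_mul_of_nonneg_right (le_abs_self _) (abs_nonneg _))
  set C : ℝ := (|C₀| + 1) / s with hC_def
  have hCpos : 0 < C := by positivity
  -- pointwise bound
  have hpt : ∀ μ : ℂ, γ < (μ - μ₀).arg → (μ - μ₀).arg < Real.pi - γ → ∀ t : ℝ,
      ‖(((Ω t : ℂ) - μ)⁻¹ - ((Ω t : ℂ) - μ₀)⁻¹) * (A t : ℂ)‖ ≤ C := by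
    intro μ h1 h2 t
    rw [hμ₀] at h1 h2 ⊢
    obtain ⟨him, habs⟩ := sector_aux hγ0 hγ2 h1 h2
    calc ‖(((Ω t : ℂ) - μ)⁻¹ - ((Ω t : ℂ) - (Ω d : ℝ))⁻¹) * (A t : ℂ)‖
        ≤ |C₀| / s := key_bound_aux (abs_nonneg C₀) hs (hC₁ t) him habs
      _ ≤ C := by rw [hC_def]; gcongr; linarith
  constructor
  · refine ⟨C, hCpos, fun μ h1 h2 y hy => ?_⟩
    have hmono : eLpNorm
        (fun t => ((((Ω t : ℂ) - μ)⁻¹ - ((Ω t : ℂ) - μ₀)⁻¹) * (A t : ℂ)) * y t) 2 volume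
        ≤ eLpNorm ((C : ℂ) • y) 2 volume := by
      apply eLpNorm_mono_ae (ae_of_all _ fun t => ?_)
      rw [Pi.smul_apply, norm_mul, norm_smul]
      have h1' : ‖(((Ω t : ℂ) - μ)⁻¹ - ((Ω t : ℂ) - μ₀)⁻¹) * (A t : ℂ)‖ ≤ C := by
        exact hpt μ h1 h2 t
      have h2' : ‖(C : ℂ)‖ = C := by
        rw [Complex.norm_real, Real.norm_eq_abs, abs_of_pos hCpos]
      rw [h2']
      exact mul_le_mul_of_nonneg_right h1' (norm_nonneg _)
    refine hmono.trans (le_of_eq ?_)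
    rw [eLpNorm_const_smul ((C : ℂ)) y 2 volume, ← ofReal_norm_eq_enorm, Complex.norm_real,
      Real.norm_eq_abs, abs_of_pos hCpos]
  · intro y hy
    have hsm := hy.aestronglyMeasurable
    set y' := hsm.mk y with hy'_def
    have hy'sm : StronglyMeasurable y' := hsm.stronglyMeasurable_mk
    have heq : y =ᵐ[volume] y' := hsm.ae_eq_mk
    have hy' : MemLp y' 2 volume := hy.ae_eq heq
    have hfun : ∀ μ : ℂ,
        eLpNorm (fun t => ((((Ω t : ℂ) - μ)⁻¹ - ((Ω t : ℂ) - μ₀)⁻¹) * (A t : ℂ)) * y t) 2 volume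
          = eLpNorm (fun t => ((((Ω t : ℂ) - μ)⁻¹ - ((Ω t : ℂ) - μ₀)⁻¹) * (A t : ℂ)) * y' t)
              2 volume :=
      fun μ => eLpNorm_congr_ae (heq.mono fun t ht => by simp only []; rw [ht])
    have hpow2 : ∀ a : ℝ≥0∞, a ^ ((2 : ℝ≥0∞).toReal) = a ^ (2 : ℕ) := fun a => by
      rw [ENNReal.toReal_ofNat, show (2 : ℝ) = ((2 : ℕ) : ℝ) by norm_num, ENNReal.rpow_natCast]
    have hrw : ∀ g : ℝ → ℂ, eLpNorm g 2 volume
        = (∫⁻ t, (‖g t‖₊ : ℝ≥0∞) ^ (2 : ℕ)) ^ (1 / 2 : ℝ) := by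
      intro g
      rw [eLpNorm_eq_lintegral_rpow_enorm_toReal two_ne_zero ENNReal.ofNat_ne_top]
      simp_rw [hpow2, enorm_eq_nnnorm]
      norm_num
    simp_rw [hfun, hrw]
    have hΩc : Continuous Ω := hΩ.continuous
    have hmeas : ∀ μ : ℂ, Measurable fun t : ℝ =>
        ((((Ω t : ℂ) - μ)⁻¹ - ((Ω t : ℂ) - μ₀)⁻¹) * (A t : ℂ)) * y' t := by
      intro μ
      have h1 : Measurable fun t : ℝ => ((Ω t : ℂ)) :=
        Complex.measurable_ofReal.comp hΩc.measurable
      exact ((((h1.sub measurable_const).inv).sub ((h1.sub measurable_const).inv)).mul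
        (Complex.measurable_ofReal.comp hAcont.measurable)).mul hy'sm.measurable
    have hL : Tendsto (fun μ : ℂ => ∫⁻ t,
        (‖((((Ω t : ℂ) - μ)⁻¹ - ((Ω t : ℂ) - μ₀)⁻¹) * (A t : ℂ)) * y' t‖₊ : ℝ≥0∞) ^ (2 : ℕ))
        (nhdsWithin μ₀ {z : ℂ | γ < (z - μ₀).arg ∧ (z - μ₀).arg < Real.pi - γ}) (𝓝 0) := by
      have := tendsto_lintegral_filter_of_dominated_convergence
        (μ := volume)
        (l := nhdsWithin μ₀ {z : ℂ | γ < (z - μ₀).arg ∧ (z - μ₀).arg < Real.pi - γ})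
        (F := fun μ : ℂ => fun t =>
          (‖((((Ω t : ℂ) - μ)⁻¹ - ((Ω t : ℂ) - μ₀)⁻¹) * (A t : ℂ)) * y' t‖₊ : ℝ≥0∞) ^ (2 : ℕ))
        (f := fun _ => (0 : ℝ≥0∞))
        (fun t => (ENNReal.ofReal C) ^ (2 : ℕ) * (‖y' t‖₊ : ℝ≥0∞) ^ (2 : ℕ))
        ?_ ?_ ?_ ?_
      · simpa using this
      · exact Eventually.of_forall fun μ =>
          ((hmeas μ).nnnorm.coe_nnreal_ennreal).pow_const 2
      · refine eventually_nhdsWithin_of_forall fun μ hμ => ae_of_all _ fun t => ?_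
        obtain ⟨h1, h2⟩ := hμ
        have hb : (‖((((Ω t : ℂ) - μ)⁻¹ - ((Ω t : ℂ) - μ₀)⁻¹) * (A t : ℂ)) * y' t‖₊ : ℝ≥0∞)
            ≤ ENNReal.ofReal C * (‖y' t‖₊ : ℝ≥0∞) := by
          rw [nnnorm_mul, ENNReal.coe_mul]
          apply mul_le_mul_left
          rw [← enorm_eq_nnnorm, ← ofReal_norm_eq_enorm]
          apply ENNReal.ofReal_le_ofReal
          exact hpt μ h1 h2 t
        calc (‖((((Ω t : ℂ) - μ)⁻¹ - ((Ω t : ℂ) - μ₀)⁻¹) * (A t : ℂ)) * y' t‖₊ : ℝ≥0∞) ^ (2 : ℕ)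
            ≤ (ENNReal.ofReal C * (‖y' t‖₊ : ℝ≥0∞)) ^ (2 : ℕ) := pow_le_pow_left' hb 2
          _ = (ENNReal.ofReal C) ^ (2 : ℕ) * (‖y' t‖₊ : ℝ≥0∞) ^ (2 : ℕ) := mul_pow _ _ _
      · have hy2 := lintegral_rpow_enorm_lt_top_of_eLpNorm_lt_top (f := y')
          two_ne_zero ENNReal.ofNat_ne_top hy'.2
        simp_rw [hpow2, enorm_eq_nnnorm] at hy2
        rw [lintegral_const_mul _ ((hy'sm.measurable.nnnorm.coe_nnreal_ennreal).pow_const 2)]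
        exact ENNReal.mul_ne_top (ENNReal.pow_ne_top ENNReal.ofReal_ne_top) hy2.ne
      · have hae : ∀ᵐ t : ℝ ∂volume, t ≠ d := by
          rw [ae_iff]
          have : {a : ℝ | ¬a ≠ d} = {d} := by ext a; simp [eq_comm]
          rw [this]
          exact measure_singleton d
        filter_upwards [hae] with t ht
        have hne : (Ω t : ℂ) - μ₀ ≠ 0 := by
          have hΩne : Ω t ≠ Ω d := fun h => ht (hanti.injective h)
          rw [hμ₀]
          exact sub_ne_zero.mpr (by exact_mod_cast hΩne)
        have hc : Tendsto (fun μ : ℂ =>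
            ((((Ω t : ℂ) - μ)⁻¹ - ((Ω t : ℂ) - μ₀)⁻¹) * (A t : ℂ)) * y' t)
            (𝓝 μ₀) (𝓝 0) := by
          have hinv : Tendsto (fun μ : ℂ => ((Ω t : ℂ) - μ)⁻¹) (𝓝 μ₀)
              (𝓝 (((Ω t : ℂ) - μ₀)⁻¹)) :=
            (tendsto_const_nhds.sub tendsto_id).inv₀ hne
          have h2 : Tendsto (fun μ : ℂ =>
              ((((Ω t : ℂ) - μ)⁻¹ - ((Ω t : ℂ) - μ₀)⁻¹) * (A t : ℂ)) * y' t) (𝓝 μ₀)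
              (𝓝 (((((Ω t : ℂ) - μ₀)⁻¹ - ((Ω t : ℂ) - μ₀)⁻¹) * (A t : ℂ)) * y' t)) :=
            ((hinv.sub tendsto_const_nhds).mul tendsto_const_nhds).mul tendsto_const_nhds
          simpa using h2
        have hc' := hc.mono_left (nhdsWithin_le_nhds
          (s := {z : ℂ | γ < (z - μ₀).arg ∧ (z - μ₀).arg < Real.pi - γ}))
        have hφ : Continuous fun z : ℂ => ((‖z‖₊ : ℝ≥0∞)) ^ (2 : ℕ) :=
          (ENNReal.continuous_pow 2).comp (ENNReal.continuous_coe.comp continuous_nnnorm)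
        have := (hφ.continuousAt (x := (0 : ℂ))).tendsto.comp hc'
        simpa only [Function.comp_def, nnnorm_zero, ENNReal.coe_zero, zero_pow,
          OfNat.ofNat_ne_zero, ne_eq, not_false_eq_true] using this
    have h0 : (0 : ℝ≥0∞) = (0 : ℝ≥0∞) ^ (1 / 2 : ℝ) := by
      rw [ENNReal.zero_rpow_of_pos]; norm_num
    rw [h0]
    exact Filter.Tendsto.ennrpow_const _ hL
end

section
/- Let Ω : ℝ → ℝ be a bounded continuous function, A : ℝ → ℝ bounded continuous, m ≥ 1/2, and suppose ψ ∈ L²(ℝ) is a nonzero solution (in the distributional sense, with ψ'' ∈ L²) of -ψ'' + m²ψ + (Ω-μ)^{-1} A ψ = 0 with Im μ > 0. If dist(μ, [inf Ω, sup Ω]) ≥ δ > 0, then m² ≤ δ^{-1} ‖A‖_∞. In particular, every eigenvalue μ ∈ 𝐮_m satisfies |μ| ≤ sup|Ω| + m^{-2}‖A‖_∞. -/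
/-!
Instead of the paper's energy identity, use convexity: if `ψ'' = V ψ` with `Re V ≥ 0`, then
`(‖ψ‖²)'' = 2‖ψ'‖² + 2 Re V ‖ψ‖² ≥ 0`, and a nonnegative convex function on `ℝ` with finite
integral vanishes, since `2R u(x) ≤ ∫_{x-R}^{x+R} u` for every `R`. When `μ` stays at distance
`δ` from `[inf Ω, sup Ω]`, `Re (m² + A/(Ω - μ)) ≥ m² - δ⁻¹‖A‖∞`, so `m² > δ⁻¹‖A‖∞` would force
`ψ = 0`. The bound on `‖μ‖` is the case `δ = ‖μ‖ - sup|Ω|`.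
-/

open MeasureTheory Real Set Filter Topology

open scoped RealInnerProductSpace

lemma ConvexOn.mul_le_integral {u : ℝ → ℝ} (hconv : ConvexOn ℝ univ u) (hnn : 0 ≤ u)
    (hint : Integrable u) (x : ℝ) {R : ℝ} (hR : 0 ≤ R) : R * u x ≤ ∫ y, u y := by
  have hmid (h : ℝ) : 2 * u x ≤ u (x - h) + u (x + h) := by
    have := hconv.2 (mem_univ (x - h)) (mem_univ (x + h)) (by norm_num : (0 : ℝ) ≤ 1 / 2)
      (by norm_num : (0 : ℝ) ≤ 1 / 2) (by norm_num)
    simp only [smul_eq_mul] at this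
    rw [show 1 / 2 * (x - h) + 1 / 2 * (x + h) = x by ring] at this
    linarith
  have hle {a b : ℝ} (hab : a ≤ b) : ∫ y in a..b, u y ≤ ∫ y, u y := by
    rw [intervalIntegral.integral_of_le hab]
    exact setIntegral_le_integral hint (.of_forall hnn)
  have hsub : IntervalIntegrable (fun h ↦ u (x - h)) volume 0 R :=
    (hint.comp_sub_left x).intervalIntegrable
  have hadd : IntervalIntegrable (fun h ↦ u (x + h)) volume 0 R :=
    (hint.comp_add_left x).intervalIntegrable
  have hsum : ∫ _ in 0..R, 2 * u x ≤ ∫ h in 0..R, (u (x - h) + u (x + h)) :=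
    intervalIntegral.integral_mono_on hR intervalIntegrable_const (hsub.add hadd)
      fun h _ ↦ hmid h
  rw [intervalIntegral.integral_add hsub hadd, intervalIntegral.integral_comp_sub_left u x,
    intervalIntegral.integral_comp_add_left u x, intervalIntegral.integral_const,
    smul_eq_mul] at hsum
  linarith [hle (a := x - R) (b := x - 0) (by linarith),
    hle (a := x + 0) (b := x + R) (by linarith)]

lemma ConvexOn.eq_zero_of_integrable_of_nonneg {u : ℝ → ℝ} (hconv : ConvexOn ℝ univ u)
    (hnn : 0 ≤ u) (hint : Integrable u) : u = 0 := by
  funext x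
  by_contra hne
  have hpos : 0 < u x := (hnn x).lt_of_ne' hne
  have := hconv.mul_le_integral hnn hint x (R := ((∫ y, u y) + 1) / u x)
    (div_nonneg (by linarith [integral_nonneg (μ := volume) hnn]) hpos.le)
  rw [div_mul_cancel₀ _ hpos.ne'] at this
  linarith

lemma Complex.real_inner_mul_self_right (w z : ℂ) : ⟪z, w * z⟫ = w.re * ‖z‖ ^ 2 := by
  rw [Complex.inner, mul_assoc, Complex.mul_conj, Complex.normSq_eq_norm_sq, Complex.re_mul_ofReal]

section

variable {E : Type*} [NormedAddCommGroup E] [InnerProductSpace ℝ E] {ψ ψ' ψ'' : ℝ → E}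

lemma convexOn_norm_sq_of_inner_second_deriv_nonneg (hψ : ∀ t, HasDerivAt ψ (ψ' t) t)
    (hψ' : ∀ t, HasDerivAt ψ' (ψ'' t) t) (hinner : ∀ t, 0 ≤ ⟪ψ t, ψ'' t⟫) :
    ConvexOn ℝ univ (‖ψ ·‖ ^ 2) := by
  refine convexOn_of_hasDerivWithinAt2_nonneg convex_univ (f' := fun t ↦ 2 * ⟪ψ t, ψ' t⟫)
    (f'' := fun t ↦ 2 * (⟪ψ t, ψ'' t⟫ + ⟪ψ' t, ψ' t⟫))
    (fun t _ ↦ (hψ t).norm_sq.continuousAt.continuousWithinAt)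
    (fun t _ ↦ (hψ t).norm_sq.hasDerivWithinAt)
    (fun t _ ↦ (((hψ t).inner ℝ (hψ' t)).const_mul 2).hasDerivWithinAt) fun t _ ↦ ?_
  have := real_inner_self_nonneg (x := ψ' t)
  have := hinner t
  positivity

lemma eq_zero_of_memLp_two_of_inner_second_deriv_nonneg (hψ : ∀ t, HasDerivAt ψ (ψ' t) t)
    (hψ' : ∀ t, HasDerivAt ψ' (ψ'' t) t) (hinner : ∀ t, 0 ≤ ⟪ψ t, ψ'' t⟫)
    (hL2 : MemLp ψ 2) : ψ = 0 := by
  have hzero := (convexOn_norm_sq_of_inner_second_deriv_nonneg hψ hψ' hinner)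
    |>.eq_zero_of_integrable_of_nonneg (fun t ↦ by positivity)
      ((memLp_two_iff_integrable_sq_norm hL2.1).1 hL2)
  funext t
  simpa using congrFun hzero t

end

lemma eq_zero_of_memLp_two_of_second_deriv_eq_mul {ψ : ℝ → ℂ} {V : ℝ → ℂ}
    (hψ : ContDiff ℝ 2 ψ) (hL2 : MemLp ψ 2) (heq : ∀ t, deriv (deriv ψ) t = V t * ψ t)
    (hV : ∀ t, 0 ≤ (V t).re) :
    ψ = 0 := by
  refine eq_zero_of_memLp_two_of_inner_second_deriv_nonneg (ψ' := deriv ψ)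
    (ψ'' := deriv (deriv ψ)) (fun t ↦ (hψ.differentiable (by norm_num) t).hasDerivAt)
    (fun t ↦ ?_) (fun t ↦ ?_) hL2
  · simpa using (hψ.differentiable_iteratedDeriv 1 (by norm_num) t).hasDerivAt
  · rw [heq, Complex.real_inner_mul_self_right]
    exact mul_nonneg (hV t) (by positivity)

lemma abs_le_ciSup_abs_of_mem_Icc {ι : Type*} [Nonempty ι] {f : ι → ℝ}
    (hf : BddAbove (range fun i ↦ |f i|)) {x : ℝ} (hx : x ∈ Icc (⨅ i, f i) (⨆ i, f i)) :
    |x| ≤ ⨆ i, |f i| :=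
  abs_le.2 ⟨(le_ciInf fun i ↦ neg_le_of_abs_le (le_ciSup hf i)).trans hx.1,
    hx.2.trans (ciSup_le fun i ↦ (le_abs_self _).trans (le_ciSup hf i))⟩

lemma Complex.norm_sub_le_norm_ofReal_sub {x S : ℝ} (hx : |x| ≤ S) (μ : ℂ) :
    ‖μ‖ - S ≤ ‖(x : ℂ) - μ‖ := by
  rw [norm_sub_rev]
  linarith [norm_sub_norm_le μ x, Complex.norm_real x, Real.norm_eq_abs x]

lemma Complex.neg_inv_mul_le_re_ofReal_div {a K δ : ℝ} {z : ℂ} (hδ : 0 < δ) (ha : |a| ≤ K)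
    (hz : δ ≤ ‖z‖) : -(δ⁻¹ * K) ≤ ((a : ℂ) / z).re := by
  have hnorm : ‖(a : ℂ) / z‖ ≤ δ⁻¹ * K := by
    rw [norm_div, Complex.norm_real, Real.norm_eq_abs, ← div_eq_inv_mul]
    exact div_le_div₀ ((abs_nonneg a).trans ha) ha hδ hz
  linarith [neg_abs_le ((a : ℂ) / z).re, Complex.abs_re_le_norm ((a : ℂ) / z)]

theorem eigenvalue_bounds_general (Ω A : ℝ → ℝ) (hΩb : ∃ C : ℝ, ∀ t, |Ω t| ≤ C)
    (hAb : ∃ C : ℝ, ∀ t, |A t| ≤ C)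
    (m : ℝ) (hm : (1 : ℝ) / 2 ≤ m) (μ : ℂ)
    (ψ : ℝ → ℂ) (hψ : ContDiff ℝ 2 ψ) (hψ0 : ψ ≠ 0)
    (hL2 : MemLp ψ 2 volume)
    (heq : ∀ t : ℝ, -(deriv (deriv ψ) t) + (m : ℂ) ^ 2 * ψ t
        + ((A t : ℂ) / ((Ω t : ℂ) - μ)) * ψ t = 0) :
    (∀ δ : ℝ, 0 < δ →
      (∀ x ∈ Icc (⨅ t : ℝ, Ω t) (⨆ t : ℝ, Ω t), δ ≤ ‖(x : ℂ) - μ‖) →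
      m ^ 2 ≤ δ⁻¹ * ⨆ t : ℝ, |A t|) ∧
    ‖μ‖ ≤ (⨆ t : ℝ, |Ω t|) + (m ^ 2)⁻¹ * ⨆ t : ℝ, |A t| := by
  obtain ⟨CΩ, hCΩ⟩ := hΩb
  obtain ⟨CA, hCA⟩ := hAb
  have hΩ_mem (t : ℝ) : Ω t ∈ Icc (⨅ t, Ω t) (⨆ t, Ω t) :=
    ⟨ciInf_le ⟨-CΩ, by rintro _ ⟨s, rfl⟩; exact neg_le_of_abs_le (hCΩ s)⟩ t,
      le_ciSup ⟨CΩ, by rintro _ ⟨s, rfl⟩; exact le_of_abs_le (hCΩ s)⟩ t⟩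
  have hA_le (t : ℝ) : |A t| ≤ ⨆ t, |A t| := le_ciSup ⟨CA, by rintro _ ⟨s, rfl⟩; exact hCA s⟩ t
  have hbound (δ : ℝ) (hδ : 0 < δ)
      (hdist : ∀ x ∈ Icc (⨅ t : ℝ, Ω t) (⨆ t : ℝ, Ω t), δ ≤ ‖(x : ℂ) - μ‖) :
      m ^ 2 ≤ δ⁻¹ * ⨆ t : ℝ, |A t| := by
    by_contra! hlt
    refine hψ0 (eq_zero_of_memLp_two_of_second_deriv_eq_mul
      (V := fun t ↦ m ^ 2 + A t / (Ω t - μ)) hψ hL2 (fun t ↦ by linear_combination -heq t)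
      fun t ↦ ?_)
    have := Complex.neg_inv_mul_le_re_ofReal_div hδ (hA_le t) (hdist _ (hΩ_mem t))
    simp only [Complex.add_re, ← Complex.ofReal_pow, Complex.ofReal_re]
    linarith
  refine ⟨hbound, ?_⟩
  by_contra! hlt
  have hS (x : ℝ) (hx : x ∈ Icc (⨅ t, Ω t) (⨆ t, Ω t)) := Complex.norm_sub_le_norm_ofReal_sub
    (abs_le_ciSup_abs_of_mem_Icc ⟨CΩ, by rintro _ ⟨s, rfl⟩; exact hCΩ s⟩ hx) μ
  have hm2 : 0 < m ^ 2 := pow_pos (by linarith) 2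
  have hδ : 0 < ‖μ‖ - ⨆ t, |Ω t| := by
    linarith [mul_nonneg (inv_nonneg.2 hm2.le) ((abs_nonneg _).trans (hA_le 0))]
  have := (le_inv_mul_iff₀ hδ).1 (hbound _ hδ hS)
  rw [← lt_sub_iff_add_lt', inv_mul_lt_iff₀ hm2] at hlt
  linarith

/-- Eigenvalue bounds: if μ stays at distance δ from the range of Ω then m² ≤ δ⁻¹‖A‖∞,
and every eigenvalue satisfies |μ| ≤ sup|Ω| + m⁻²‖A‖∞. -/
theorem eigenvalue_bounds (Ω A : ℝ → ℝ) (hΩc : Continuous Ω) (hΩb : ∃ C : ℝ, ∀ t, |Ω t| ≤ C)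
    (hAc : Continuous A) (hAb : ∃ C : ℝ, ∀ t, |A t| ≤ C)
    (m : ℝ) (hm : (1 : ℝ) / 2 ≤ m) (μ : ℂ) (hμ : 0 < μ.im)
    (ψ : ℝ → ℂ) (hψ : ContDiff ℝ 2 ψ) (hψ0 : ψ ≠ 0)
    (hL2 : MemLp ψ 2 volume) (hL2'' : MemLp (deriv (deriv ψ)) 2 volume)
    (heq : ∀ t : ℝ, -(deriv (deriv ψ) t) + (m : ℂ) ^ 2 * ψ t
        + ((A t : ℂ) / ((Ω t : ℂ) - μ)) * ψ t = 0) :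
    (∀ δ : ℝ, 0 < δ →
      (∀ x ∈ Icc (⨅ t : ℝ, Ω t) (⨆ t : ℝ, Ω t), δ ≤ ‖(x : ℂ) - μ‖) →
      m ^ 2 ≤ δ⁻¹ * ⨆ t : ℝ, |A t|) ∧
    ‖μ‖ ≤ (⨆ t : ℝ, |Ω t|) + (m ^ 2)⁻¹ * ⨆ t : ℝ, |A t| :=
  eigenvalue_bounds_general Ω A hΩb hAb m hm μ ψ hψ hψ0 hL2 heq
end
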